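/- With independent Pareto claims V₁,…,V_d of index α and constants K_j, a random matrix A with entries in [0,1] independent of V, and u₁,…,u_k > 0, it holds that P(F_{i₁} > u₁ t, …, F_{i_k} > u_k t) ~ t^{-α} Σ_{j=1}^d K_j E[(min{A_{i₁ j}/u₁, …, A_{i_k j}/u_k})^α] as t → ∞, whenever the limit constant is positive, where F = AV. -/

import Mathlib

/-!
Conditioning on the finitely many values of `A`, which is independent of `V`, reduces the claim to
a fixed matrix `c`. For fixed `c`, with `s_j = min_m c_{mj} / u_m`, the event
`∀ m, u_m t < Σ_j c_{mj} V_j` contains every single-big-jump event `{t < s_j V_j}`; these are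
independent, so their union has probability `Σ_j K_j s_j^α t^{-α} + o(t^{-α})`. Conversely, an
exceedance in which no two claims are of order `t` forces one claim `V_j` to carry all but a small
fraction `1 - θ` of every threshold, i.e. `θ t < s_j V_j`, while two claims of order `t` have
probability `O(t^{-2α})` by independence. Letting `θ → 1` gives the matching upper bound.
-/

open MeasureTheory ProbabilityTheory Filter Real Set Finset Topology

lemma tendsto_rpow_mul_measureReal_lt_const_mul {Ω : Type*} [MeasurableSpace Ω] {μ : Measure Ω}
    {W : Ω → ℝ} {K α s : ℝ} (hα : 0 < α) (hs : 0 ≤ s)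
    (hW : Tendsto (fun t => t ^ α * μ.real {ω | t < W ω}) atTop (𝓝 K)) :
    Tendsto (fun t => t ^ α * μ.real {ω | t < s * W ω}) atTop (𝓝 (K * s ^ α)) := by
  rcases hs.eq_or_lt with rfl | hs
  · rw [zero_rpow hα.ne', mul_zero]
    refine tendsto_const_nhds.congr' ?_
    filter_upwards [eventually_ge_atTop 0] with t ht
    simp [ht.not_gt]
  · refine ((hW.comp (tendsto_id.atTop_div_const hs)).mul_const (s ^ α)).congr' ?_
    filter_upwards [eventually_ge_atTop 0] with t ht
    simp only [Function.comp_apply, id, div_lt_iff₀' hs, div_rpow ht hs.le]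
    field_simp

lemma tendsto_zero_of_tendsto_rpow_mul {g : ℝ → ℝ} {K α : ℝ} (hα : 0 < α)
    (h : Tendsto (fun t => t ^ α * g t) atTop (𝓝 K)) : Tendsto g atTop (𝓝 0) := by
  refine (h.div_atTop (tendsto_rpow_atTop hα)).congr' ?_
  filter_upwards [eventually_gt_atTop 0] with t ht
  exact mul_div_cancel_left₀ _ (rpow_pos_of_pos ht α).ne'

lemma tendsto_mul_one_sub_prod_one_sub {ι α : Type*} {l : Filter α} (s : Finset ι)
    {r : α → ℝ} {p : ι → α → ℝ} {L : ι → ℝ}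
    (hp : ∀ j ∈ s, Tendsto (fun t => r t * p j t) l (𝓝 (L j)))
    (hp0 : ∀ j ∈ s, Tendsto (p j) l (𝓝 0)) :
    Tendsto (fun t => r t * (1 - ∏ j ∈ s, (1 - p j t))) l (𝓝 (∑ j ∈ s, L j)) := by
  classical
  induction s using Finset.induction_on with
  | empty => simpa using tendsto_const_nhds
  | insert a s ha ih =>
    have hprod : Tendsto (fun t => ∏ j ∈ s, (1 - p j t)) l (𝓝 1) := by
      simpa using tendsto_finsetProd s fun j hj =>
        (tendsto_const_nhds (x := (1 : ℝ))).sub (hp0 j (mem_insert_of_mem hj))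
    have hrest := ih (fun j hj => hp j (mem_insert_of_mem hj))
      (fun j hj => hp0 j (mem_insert_of_mem hj))
    have hnew := (hp a (mem_insert_self a s)).mul hprod
    rw [mul_one] at hnew
    rw [sum_insert ha, add_comm]
    refine (hrest.add hnew).congr fun t => ?_
    rw [prod_insert ha]
    ring

lemma forall_mul_lt_mul_iff_lt_iInf_div_mul {ι : Type*} [Finite ι] [Nonempty ι]
    {b c : ι → ℝ} {w x : ℝ} (hb : ∀ m, 0 < b m) (hw : 0 ≤ w) :
    (∀ m, b m * x < c m * w) ↔ x < (⨅ m, c m / b m) * w := by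
  have key : ∀ m, b m * x < c m * w ↔ x < c m / b m * w := fun m => by
    rw [div_mul_eq_mul_div, lt_div_iff₀' (hb m)]
  simp only [key, Real.iInf_mul_of_nonneg hw]
  obtain ⟨m₀, hm₀⟩ := exists_eq_ciInf_of_finite (f := fun m => c m / b m * w)
  exact ⟨fun h => hm₀ ▸ h m₀, fun h m => h.trans_le (ciInf_le (finite_range _).bddBelow m)⟩

lemma measureReal_iUnion_preimage_eq_one_sub_prod {Ω κ β : Type*} [MeasurableSpace Ω]
    [MeasurableSpace β] {μ : Measure Ω} [IsProbabilityMeasure μ] [Fintype κ]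
    {V : κ → Ω → β} (hV : ∀ j, Measurable (V j)) (hind : iIndepFun V μ)
    {B : κ → Set β} (hB : ∀ j, MeasurableSet (B j)) :
    μ.real (⋃ j, V j ⁻¹' B j) = 1 - ∏ j, (1 - μ.real (V j ⁻¹' B j)) := by
  have hinter : μ.real (⋂ j, V j ⁻¹' (B j)ᶜ) = ∏ j, μ.real (V j ⁻¹' (B j)ᶜ) := by
    simpa [measureReal_def, ENNReal.toReal_prod] using
      congrArg ENNReal.toReal (hind.measure_inter_preimage_eq_mul univ fun j _ => (hB j).compl)
  have hcompl := probReal_compl_eq_one_sub (μ := μ) (MeasurableSet.iUnion fun j => hV j (hB j))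
  rw [compl_iUnion] at hcompl
  simp only [preimage_compl] at hinter hcompl
  have hfactor : ∀ j, μ.real (V j ⁻¹' B j)ᶜ = 1 - μ.real (V j ⁻¹' B j) := fun j =>
    probReal_compl_eq_one_sub (hV j (hB j))
  simp only [hfactor] at hinter
  linarith

lemma exists_forall_sub_lt_mul_of_forall_lt_sum {ι κ : Type*} [Nonempty ι] [Fintype κ]
    {c : ι → κ → ℝ} {v : κ → ℝ} {a : ι → ℝ} {r : ℝ}
    (hc : ∀ m j, c m j ≤ 1) (hv : ∀ j, 0 ≤ v j) (ha : ∀ m, 0 ≤ a m) (hr : 0 ≤ r)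
    (hsmall : ∀ j j', j ≠ j' → v j ≤ r ∨ v j' ≤ r) (hlt : ∀ m, a m < ∑ j, c m j * v j) :
    ∃ j, ∀ m, a m - Fintype.card κ * r < c m j * v j := by
  classical
  obtain ⟨m₀⟩ := ‹Nonempty ι›
  have : Nonempty κ := by
    by_contra hκ
    rw [not_nonempty_iff] at hκ
    simpa using (hlt m₀).trans_le' (ha m₀)
  obtain ⟨j₀, -, hj₀⟩ := exists_max_image univ v univ_nonempty
  refine ⟨j₀, fun m => ?_⟩
  have hrest : ∑ j ∈ univ.erase j₀, c m j * v j ≤ Fintype.card κ * r := calc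
    ∑ j ∈ univ.erase j₀, c m j * v j ≤ ∑ j ∈ univ.erase j₀, r := by
      refine sum_le_sum fun j hj => ?_
      have hvj : v j ≤ r := (hsmall j j₀ (ne_of_mem_erase hj)).elim id
        fun h => (hj₀ j (mem_univ j)).trans h
      exact (mul_le_of_le_one_left (hv j) (hc m j)).trans hvj
    _ = #(univ.erase j₀) * r := by rw [sum_const, nsmul_eq_mul]
    _ ≤ Fintype.card κ * r := by
      gcongr
      exact card_erase_le
  have := hlt m
  rw [← add_sum_erase _ _ (mem_univ j₀)] at this
  linarith

section FixedMatrix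

variable {Ω ι κ : Type*} [Nonempty ι] [Finite ι] [Fintype κ]
  {V : κ → Ω → ℝ} {c : ι → κ → ℝ} {u : ι → ℝ}

lemma setOf_forall_lt_sum_subset_union (hV : ∀ j ω, 0 ≤ V j ω) (hc : ∀ m j, c m j ≤ 1)
    (hu : ∀ m, 0 < u m) {θ ρ t : ℝ} (hθ : 0 < θ) (hρ : 0 < ρ)
    (hρθ : ∀ m, Fintype.card κ ≤ ρ * ((1 - θ) * u m)) (ht : 0 ≤ t) :
    {ω | ∀ m, u m * t < ∑ j, c m j * V j ω} ⊆
      (⋃ j, {ω | t < (⨅ m, c m j / u m) / θ * V j ω}) ∪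
        ⋃ p ∈ (univ : Finset κ).offDiag, {ω | t < ρ * V p.1 ω} ∩ {ω | t < ρ * V p.2 ω} := by
  intro ω hω
  by_cases htwo : ω ∈ ⋃ p ∈ (univ : Finset κ).offDiag,
      {ω | t < ρ * V p.1 ω} ∩ {ω | t < ρ * V p.2 ω}
  · exact Or.inr htwo
  refine Or.inl ?_
  have hsmall : ∀ j j', j ≠ j' → V j ω ≤ t / ρ ∨ V j' ω ≤ t / ρ := by
    intro j j' hne
    simp only [le_div_iff₀ hρ, mul_comm _ ρ, ← not_lt, ← not_and_or]
    exact fun h => htwo (Set.mem_biUnion (x := (j, j')) (by simp [hne]) h)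
  obtain ⟨j, hj⟩ := exists_forall_sub_lt_mul_of_forall_lt_sum hc (fun j => hV j ω)
    (fun m => mul_nonneg (hu m).le ht) (div_nonneg ht hρ.le) hsmall hω
  refine mem_iUnion.2 ⟨j, ?_⟩
  have hθt : ∀ m, u m * (θ * t) < c m j * V j ω := fun m => by
    refine lt_of_le_of_lt ?_ (hj m)
    have := mul_le_mul_of_nonneg_right (hρθ m) (div_nonneg ht hρ.le)
    rw [mul_comm ρ, mul_assoc, mul_div_cancel₀ t hρ.ne'] at this
    nlinarith
  rw [forall_mul_lt_mul_iff_lt_iInf_div_mul hu (hV j ω)] at hθt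
  show t < _ / θ * V j ω
  rw [div_mul_eq_mul_div, lt_div_iff₀' hθ]
  exact hθt

variable [MeasurableSpace Ω] {μ : Measure Ω} [IsProbabilityMeasure μ]

lemma measureReal_setOf_forall_lt_sum_le (hV : ∀ j ω, 0 ≤ V j ω) (hind : iIndepFun V μ)
    (hc : ∀ m j, c m j ≤ 1) (hu : ∀ m, 0 < u m) {θ ρ t : ℝ} (hθ : 0 < θ)
    (hρ : 0 < ρ) (hρθ : ∀ m, Fintype.card κ ≤ ρ * ((1 - θ) * u m)) (ht : 0 ≤ t) :
    μ.real {ω | ∀ m, u m * t < ∑ j, c m j * V j ω} ≤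
      ∑ j, μ.real {ω | t < (⨅ m, c m j / u m) / θ * V j ω} +
        ∑ p ∈ (univ : Finset κ).offDiag,
          μ.real {ω | t < ρ * V p.1 ω} * μ.real {ω | t < ρ * V p.2 ω} := by
  have hpair : ∀ p ∈ (univ : Finset κ).offDiag,
      μ.real ({ω | t < ρ * V p.1 ω} ∩ {ω | t < ρ * V p.2 ω}) =
        μ.real {ω | t < ρ * V p.1 ω} * μ.real {ω | t < ρ * V p.2 ω} := fun p hp => by
    have hmeas : MeasurableSet {x : ℝ | t < ρ * x} :=
      measurableSet_lt measurable_const (measurable_id.const_mul ρ)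
    simpa [measureReal_def] using congrArg ENNReal.toReal <|
      (hind.indepFun (mem_offDiag.1 hp).2.2).measure_inter_preimage_eq_mul _ _ hmeas hmeas
  calc μ.real {ω | ∀ m, u m * t < ∑ j, c m j * V j ω}
      ≤ μ.real (⋃ j, {ω | t < (⨅ m, c m j / u m) / θ * V j ω}) +
          μ.real (⋃ p ∈ (univ : Finset κ).offDiag,
            {ω | t < ρ * V p.1 ω} ∩ {ω | t < ρ * V p.2 ω}) :=
        (measureReal_mono (setOf_forall_lt_sum_subset_union hV hc hu hθ hρ hρθ ht)).trans
          (measureReal_union_le _ _)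
    _ ≤ ∑ j, μ.real {ω | t < (⨅ m, c m j / u m) / θ * V j ω} +
          ∑ p ∈ (univ : Finset κ).offDiag,
            μ.real ({ω | t < ρ * V p.1 ω} ∩ {ω | t < ρ * V p.2 ω}) :=
        add_le_add (measureReal_iUnion_fintype_le _) (measureReal_biUnion_finset_le _ _)
    _ = _ := by rw [sum_congr rfl hpair]

variable {K : κ → ℝ} {α : ℝ}

lemma eventually_lt_rpow_mul_measureReal_setOf_forall_lt_sum (hVmeas : ∀ j, Measurable (V j))
    (hV : ∀ j ω, 0 ≤ V j ω) (hind : iIndepFun V μ) (hα : 0 < α)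
    (htail : ∀ j, Tendsto (fun t => t ^ α * μ.real {ω | t < V j ω}) atTop (𝓝 (K j)))
    (hc : ∀ m j, 0 ≤ c m j) (hu : ∀ m, 0 < u m) {L : ℝ}
    (hL : L < ∑ j, K j * (⨅ m, c m j / u m) ^ α) :
    ∀ᶠ t in atTop, L < t ^ α * μ.real {ω | ∀ m, u m * t < ∑ j, c m j * V j ω} := by
  set s : κ → ℝ := fun j => ⨅ m, c m j / u m
  have hs : ∀ j, 0 ≤ s j := fun j => le_ciInf fun m => div_nonneg (hc m j) (hu m).le
  have hbig := fun j => tendsto_rpow_mul_measureReal_lt_const_mul hα (hs j) (htail j)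
  have hlim := tendsto_mul_one_sub_prod_one_sub univ (fun j _ => hbig j)
    fun j _ => tendsto_zero_of_tendsto_rpow_mul hα (hbig j)
  filter_upwards [hlim.eventually_const_lt hL, eventually_ge_atTop 0] with t hLt ht
  refine hLt.trans_le (mul_le_mul_of_nonneg_left ?_ (rpow_nonneg ht α))
  have hBmeas : ∀ j, MeasurableSet {x : ℝ | t < s j * x} := fun j =>
    measurableSet_lt measurable_const (measurable_id.const_mul _)
  refine (measureReal_iUnion_preimage_eq_one_sub_prod hVmeas hind hBmeas).symm.trans_le
    (measureReal_mono fun ω hω m => ?_)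
  obtain ⟨j, hj⟩ := mem_iUnion.1 hω
  refine ((forall_mul_lt_mul_iff_lt_iInf_div_mul hu (hV j ω)).2 hj m).trans_le ?_
  exact single_le_sum (fun j _ => mul_nonneg (hc m j) (hV j ω)) (mem_univ j)

lemma eventually_rpow_mul_measureReal_setOf_forall_lt_sum_lt (hV : ∀ j ω, 0 ≤ V j ω)
    (hind : iIndepFun V μ) (hα : 0 < α)
    (htail : ∀ j, Tendsto (fun t => t ^ α * μ.real {ω | t < V j ω}) atTop (𝓝 (K j)))
    (hc : ∀ m j, c m j ∈ Set.Icc (0 : ℝ) 1) (hu : ∀ m, 0 < u m) {L : ℝ}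
    (hL : ∑ j, K j * (⨅ m, c m j / u m) ^ α < L) :
    ∀ᶠ t in atTop, t ^ α * μ.real {ω | ∀ m, u m * t < ∑ j, c m j * V j ω} < L := by
  set s : κ → ℝ := fun j => ⨅ m, c m j / u m
  set S := ∑ j, K j * s j ^ α
  have hs : ∀ j, 0 ≤ s j := fun j => le_ciInf fun m => div_nonneg (hc m j).1 (hu m).le
  obtain ⟨θ, hθL, hθ, hθ1⟩ : ∃ θ, S / θ ^ α < L ∧ θ ∈ Set.Ioo 0 1 := by
    have hcont : Tendsto (fun θ : ℝ => S / θ ^ α) (𝓝[<] 1) (𝓝 S) := by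
      have := (continuousAt_const (y := S) (x := (1 : ℝ))).div
        (continuousAt_id.rpow_const (p := α) (Or.inl one_ne_zero)) (by simp)
      simpa [Pi.div_def] using this.tendsto.mono_left nhdsWithin_le_nhds
    exact ((hcont.eventually_lt_const hL).and (Ioo_mem_nhdsLT zero_lt_one)).exists
  -- with `ρ` this large, claims that are all at most `t / ρ` add up to at most `(1 - θ) u_m t`
  obtain ⟨ρ, hρθ, hρ⟩ : ∃ ρ, (∀ m, (Fintype.card κ : ℝ) ≤ ρ * ((1 - θ) * u m)) ∧ 0 < ρ :=
    ((eventually_all.2 fun m => (tendsto_id.atTop_mul_const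
      (mul_pos (sub_pos.2 hθ1) (hu m))).eventually_ge_atTop _).and
        (eventually_gt_atTop 0)).exists
  have hbig := fun j {a : ℝ} (ha : 0 ≤ a) =>
    tendsto_rpow_mul_measureReal_lt_const_mul hα ha (htail j)
  have hlim : Tendsto (fun t => t ^ α *
      (∑ j, μ.real {ω | t < s j / θ * V j ω} + ∑ p ∈ (univ : Finset κ).offDiag,
        μ.real {ω | t < ρ * V p.1 ω} * μ.real {ω | t < ρ * V p.2 ω})) atTop
      (𝓝 (∑ j, K j * (s j / θ) ^ α + ∑ p ∈ (univ : Finset κ).offDiag, K p.1 * ρ ^ α * 0)) := by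
    simp only [mul_add, mul_sum, ← mul_assoc]
    exact (tendsto_finsetSum _ fun j _ => hbig j (div_nonneg (hs j) hθ.le)).add
      (tendsto_finsetSum _ fun p _ => (hbig p.1 hρ.le).mul
        (tendsto_zero_of_tendsto_rpow_mul hα (hbig p.2 hρ.le)))
  have hval : ∑ j, K j * (s j / θ) ^ α +
      ∑ p ∈ (univ : Finset κ).offDiag, K p.1 * ρ ^ α * 0 = S / θ ^ α := by
    simp only [mul_zero, sum_const_zero, add_zero, div_rpow (hs _) hθ.le, S, sum_div,
      mul_div_assoc]
  rw [hval] at hlim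
  filter_upwards [hlim.eventually_lt_const hθL, eventually_ge_atTop 0] with t hLt ht
  refine lt_of_le_of_lt (mul_le_mul_of_nonneg_left ?_ (rpow_nonneg ht α)) hLt
  exact measureReal_setOf_forall_lt_sum_le hV hind (fun m j => (hc m j).2) hu hθ hρ hρθ ht

theorem tendsto_rpow_mul_measureReal_setOf_forall_lt_sum (hVmeas : ∀ j, Measurable (V j))
    (hV : ∀ j ω, 0 ≤ V j ω) (hind : iIndepFun V μ) (hα : 0 < α)
    (htail : ∀ j, Tendsto (fun t => t ^ α * μ.real {ω | t < V j ω}) atTop (𝓝 (K j)))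
    (hc : ∀ m j, c m j ∈ Set.Icc (0 : ℝ) 1) (hu : ∀ m, 0 < u m) :
    Tendsto (fun t => t ^ α * μ.real {ω | ∀ m, u m * t < ∑ j, c m j * V j ω}) atTop
      (𝓝 (∑ j, K j * (⨅ m, c m j / u m) ^ α)) :=
  tendsto_order.2
    ⟨fun _ hL => eventually_lt_rpow_mul_measureReal_setOf_forall_lt_sum hVmeas hV hind hα htail
      (fun m j => (hc m j).1) hu hL,
    fun _ hL => eventually_rpow_mul_measureReal_setOf_forall_lt_sum_lt hV hind hα htail hc hu hL⟩

end FixedMatrix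

section FiniteRange

variable {Ω β : Type*} [MeasurableSpace Ω] [MeasurableSpace β] [MeasurableSingletonClass β]
  {μ : Measure Ω} [IsFiniteMeasure μ] {X : Ω → β}

lemma integral_comp_eq_sum_of_finite_range {E : Type*} [NormedAddCommGroup E] [NormedSpace ℝ E]
    [CompleteSpace E] (hX : Measurable X) (hfin : (range X).Finite) (φ : β → E) :
    ∫ ω, φ (X ω) ∂μ = ∑ b ∈ hfin.toFinset, μ.real (X ⁻¹' {b}) • φ b := by
  have hsplit : (fun ω => φ (X ω)) =
      fun ω => ∑ b ∈ hfin.toFinset, (X ⁻¹' {b}).indicator (fun _ => φ b) ω := by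
    funext ω
    rw [sum_eq_single_of_mem (X ω) (by simp)]
    · simp
    · intro b _ hb
      exact indicator_of_notMem (Ne.symm hb) _
  rw [hsplit, integral_finsetSum _ fun b _ =>
    (integrable_const _).indicator (hX (measurableSet_singleton b))]
  exact sum_congr rfl fun b _ => integral_indicator_const _ (hX (measurableSet_singleton b))

lemma measureReal_setOf_mem_eq_sum {γ : Type*} [MeasurableSpace γ] {Y : Ω → γ}
    (hX : Measurable X) (hY : Measurable Y) (hXY : IndepFun X Y μ) (hfin : (range X).Finite)
    {S : β → Set γ} (hS : ∀ b, MeasurableSet (S b)) :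
    μ.real {ω | Y ω ∈ S (X ω)} =
      ∑ b ∈ hfin.toFinset, μ.real (X ⁻¹' {b}) * μ.real (Y ⁻¹' S b) := by
  have hunion : {ω | Y ω ∈ S (X ω)} = ⋃ b ∈ hfin.toFinset, X ⁻¹' {b} ∩ Y ⁻¹' S b := by
    ext ω
    simp only [mem_ofPred_eq, mem_iUnion, mem_inter_iff, Set.mem_preimage, Set.mem_singleton_iff,
      Set.Finite.mem_toFinset, exists_prop]
    exact ⟨fun h => ⟨X ω, mem_range_self ω, rfl, h⟩, fun ⟨_, _, hb, h⟩ => hb ▸ h⟩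
  rw [hunion, measureReal_biUnion_finset]
  · refine sum_congr rfl fun b _ => ?_
    simpa [measureReal_def] using congrArg ENNReal.toReal <|
      hXY.measure_inter_preimage_eq_mul _ _ (measurableSet_singleton b) (hS b)
  · intro b _ b' _ hbb'
    exact disjoint_left.2 fun ω hb hb' => hbb' (hb.1.symm.trans hb'.1)
  · exact fun b _ => (hX (measurableSet_singleton b)).inter (hY (hS b))

lemma tendsto_mul_measureReal_setOf_mem_of_indepFun {γ τ : Type*} [MeasurableSpace γ]
    {Y : Ω → γ} (hX : Measurable X) (hY : Measurable Y) (hXY : IndepFun X Y μ)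
    (hfin : (range X).Finite) {l : Filter τ} {r : τ → ℝ} {S : τ → β → Set γ}
    (hS : ∀ t b, MeasurableSet (S t b)) {L : β → ℝ}
    (hL : ∀ b ∈ range X, Tendsto (fun t => r t * μ.real (Y ⁻¹' S t b)) l (𝓝 (L b))) :
    Tendsto (fun t => r t * μ.real {ω | Y ω ∈ S t (X ω)}) l (𝓝 (∫ ω, L (X ω) ∂μ)) := by
  simp only [measureReal_setOf_mem_eq_sum hX hY hXY hfin (hS _),
    integral_comp_eq_sum_of_finite_range hX hfin, mul_sum, smul_eq_mul, mul_left_comm (r _)]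
  exact tendsto_finsetSum _ fun b hb => (hL b (hfin.mem_toFinset.1 hb)).const_mul _

end FiniteRange

theorem stmt_7_general {Ω : Type*} [MeasurableSpace Ω] (μ : Measure Ω) [IsProbabilityMeasure μ]
    (q d : ℕ) (A : Ω → Fin q → Fin d → ℝ)
    (hAmeas : Measurable A) (hAfin : (Set.range A).Finite)
    (hA01 : ∀ ω i j, A ω i j ∈ Set.Icc (0 : ℝ) 1)
    (V : Fin d → Ω → ℝ) (hVmeas : ∀ j, Measurable (V j)) (hVnonneg : ∀ j ω, 0 ≤ V j ω)
    (hVindep : iIndepFun V μ)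
    (hAV : IndepFun A (fun ω j => V j ω) μ)
    (K : Fin d → ℝ) (α : ℝ) (hα : 0 < α)
    (htail : ∀ j, Tendsto (fun t : ℝ => t ^ α * (μ {ω | t < V j ω}).toReal) atTop
      (nhds (K j)))
    (k : ℕ) (hk : 0 < k) (idx : Fin k → Fin q)
    (u : Fin k → ℝ) (hu : ∀ m, 0 < u m) :
    Tendsto (fun t : ℝ =>
        t ^ α * (μ {ω | ∀ m, u m * t < ∑ j, A ω (idx m) j * V j ω}).toReal) atTop
      (nhds (∑ j, K j * ∫ ω, (⨅ m, A ω (idx m) j / u m) ^ α ∂μ)) := by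
  have : Nonempty (Fin k) := Fin.pos_iff_nonempty.1 hk
  have hmean : ∀ φ : (Fin q → Fin d → ℝ) → ℝ,
      ∫ ω, φ (A ω) ∂μ = ∑ a ∈ hAfin.toFinset, μ.real (A ⁻¹' {a}) * φ a :=
    integral_comp_eq_sum_of_finite_range hAmeas hAfin
  have hconst : ∑ j, K j * ∫ ω, (⨅ m, A ω (idx m) j / u m) ^ α ∂μ =
      ∫ ω, ∑ j, K j * (⨅ m, A ω (idx m) j / u m) ^ α ∂μ := by
    rw [hmean (fun a => ∑ j, K j * (⨅ m, a (idx m) j / u m) ^ α)]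
    simp only [fun j => hmean (fun a => (⨅ m, a (idx m) j / u m) ^ α), mul_sum]
    rw [sum_comm]
    simp only [mul_left_comm]
  rw [hconst]
  refine tendsto_mul_measureReal_setOf_mem_of_indepFun hAmeas (measurable_pi_lambda _ hVmeas)
    hAV hAfin (S := fun t a => {v | ∀ m, u m * t < ∑ j, a (idx m) j * v j})
    (L := fun a => ∑ j, K j * (⨅ m, a (idx m) j / u m) ^ α) (fun t a => by measurability) ?_
  rintro _ ⟨ω, rfl⟩
  exact tendsto_rpow_mul_measureReal_setOf_forall_lt_sum hVmeas hVnonneg hVindep hα htail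
    (fun m j => hA01 ω (idx m) j) hu

/-- Joint marginal exceedances: with independent Pareto claims, a random
matrix `A` with entries in `[0,1]` independent of `V`, distinct agents `i₁,…,i_k` and
positive `u₁,…,u_k`:
`P(F_{i₁} > u₁ t, …, F_{i_k} > u_k t) ~ t^{-α} Σ_j K_j E[(min_m A_{i_m j}/u_m)^α]`,
whenever the limit constant is positive, where `F_i = Σ_j A_{ij} V_j`. -/
theorem stmt_7 {Ω : Type*} [MeasurableSpace Ω] (μ : Measure Ω) [IsProbabilityMeasure μ]
    (q d : ℕ) (A : Ω → Fin q → Fin d → ℝ)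
    (hAmeas : Measurable A) (hAfin : (Set.range A).Finite)
    (hA01 : ∀ ω i j, A ω i j ∈ Set.Icc (0 : ℝ) 1)
    (V : Fin d → Ω → ℝ) (hVmeas : ∀ j, Measurable (V j)) (hVnonneg : ∀ j ω, 0 ≤ V j ω)
    (hVindep : iIndepFun V μ)
    (hAV : IndepFun A (fun ω j => V j ω) μ)
    (K : Fin d → ℝ) (α : ℝ) (hK : ∀ j, 0 < K j) (hα : 0 < α)
    (htail : ∀ j, Tendsto (fun t : ℝ => t ^ α * (μ {ω | t < V j ω}).toReal) atTop
      (nhds (K j)))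
    (k : ℕ) (hk : 0 < k) (idx : Fin k → Fin q) (hidx : Function.Injective idx)
    (u : Fin k → ℝ) (hu : ∀ m, 0 < u m)
    (hpos : 0 < ∑ j, K j * ∫ ω, (⨅ m, A ω (idx m) j / u m) ^ α ∂μ) :
    Tendsto (fun t : ℝ =>
        t ^ α * (μ {ω | ∀ m, u m * t < ∑ j, A ω (idx m) j * V j ω}).toReal) atTop
      (nhds (∑ j, K j * ∫ ω, (⨅ m, A ω (idx m) j / u m) ^ α ∂μ)) :=
  stmt_7_general μ q d A hAmeas hAfin hA01 V hVmeas hVnonneg hVindep hAV K α hα htail k hk idx u hu
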